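/- Let k ∈ ℤ with k ∉ {0, −1}, and let f = x² + k ∈ ℤ[x]. If −k is not the square of an integer, then f is stable, i.e. f^n is irreducible over ℚ for all n ≥ 1. If −k = a² for some a ∈ ℤ (necessarily with |a| ≥ 2), then f = (x + a)(x − a) and both x + a and x − a are f-stable: for g = x + a and for g = x − a, the polynomial g ∘ f^n is irreducible over ℚ for every n ≥ 0. -/

import Mathlib

open Polynomial

/-- The `n`-th iterate of a polynomial, with `f^0 = X`. -/
noncomputable def polyIter (f : Polynomial ℤ) : ℕ → Polynomial ℤ
  | 0 => X
  | n + 1 => f.comp (polyIter f n)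

/-!
Let `g` be monic irreducible of degree `d` over a field of characteristic `≠ 2` with `g(X²)`
reducible, and let `P` be a monic irreducible factor of `g(X²)`; since `g(X²)` is even, so is
`P* = (-1)^d P(-X)`. If `P* = P`, then either `P` is even, hence `P = T(X²)` with `T ∣ g`, forcing
`P = g(X²)`; or `P` is odd and `g(0) = 0`. Otherwise `P · P*` is an even divisor of `g(X²)`, so it
is all of it, and `(-1)^d g(0) = P(0)²`. Since `h(X² + k) = (h ∘ (X + k))(X²)`, the polynomial
`h ∘ f` with `f = X² + k` is irreducible as soon as `h` is and `(-1)^(deg h) h(k)` is not a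
square. For `h = g ∘ f^n` this value is `±g(c_{n+1})` along the critical orbit `c_n = f^n(0)`,
and the bound `|k| ≤ |c_n|` (`n ≥ 1`) traps `c_{n+1} + e = c_n² + k + e` strictly between two
consecutive squares.
-/

theorem eq_zero_of_eq_neg {R : Type*} [Ring R] [NoZeroDivisors R] [NeZero (2 : R)] {a : R}
    (h : a = -a) : a = 0 :=
  (mul_eq_zero.1 (by rw [two_mul]; exact eq_neg_iff_add_eq_zero.1 h)).resolve_left two_ne_zero

namespace Polynomial

variable {R : Type*} [CommRing R]

theorem coeff_comp_neg_X (p : R[X]) (n : ℕ) : (p.comp (-X)).coeff n = (-1) ^ n * p.coeff n := by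
  induction p using Polynomial.induction_on' with
  | add p q hp hq => simp [add_comp, hp, hq, mul_add]
  | monomial m a =>
    rw [monomial_comp, neg_pow, ← mul_assoc, show C a * (-1) ^ m = C (a * (-1) ^ m) by simp,
      coeff_C_mul_X_pow, coeff_monomial]
    split_ifs with h₁ h₂ <;> subst_vars <;> simp_all [mul_comm]

theorem expand_two_comp_neg_X (p : R[X]) : (expand R 2 p).comp (-X) = expand R 2 p := by
  rw [expand_eq_comp_X_pow, comp_assoc, X_pow_comp, neg_sq]

theorem expand_contract_two_of_comp_neg_X_eq [NoZeroDivisors R] [NeZero (2 : R)] {p : R[X]}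
    (hp : p.comp (-X) = p) : expand R 2 (contract 2 p) = p := by
  ext n
  rw [coeff_expand two_pos, coeff_contract two_ne_zero]
  split_ifs with h
  · rw [Nat.div_mul_cancel h]
  · have hn : (-1) ^ n * p.coeff n = p.coeff n := by rw [← coeff_comp_neg_X, hp]
    rw [(Nat.odd_iff.2 (Nat.two_dvd_ne_zero.1 h)).neg_one_pow, neg_one_mul] at hn
    exact (eq_zero_of_eq_neg hn.symm).symm

theorem expand_dvd_expand_iff {p : ℕ} (hp : p ≠ 0) {f g : R[X]} :
    expand R p f ∣ expand R p g ↔ f ∣ g := by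
  refine ⟨fun ⟨q, hq⟩ => ⟨contract p q, ?_⟩, _root_.map_dvd _⟩
  rw [← contract_expand p (f := g) hp, hq, mul_comm, contract_mul_expand hp, mul_comm]

theorem isSquare_of_mul_comp_neg_X_eq_expand_two [IsDomain R] {g P : R[X]} (hP : P.Monic)
    (h : P * ((-1) ^ P.natDegree * P.comp (-X)) = expand R 2 g) :
    IsSquare ((-1) ^ g.natDegree * g.eval 0) := by
  set d := P.natDegree
  have hdeg : d = g.natDegree := by
    have hP'deg : ((-1) ^ d * P.comp (-X)).natDegree = d := by
      rw [natDegree_mul (by simp) (by simp [hP.ne_zero])]; simp [natDegree_comp, d]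
    have := congr_arg natDegree h
    rw [hP.natDegree_mul hP.neg_one_pow_natDegree_mul_comp_neg_X, natDegree_expand, hP'deg] at this
    omega
  have hg0 : g.eval 0 = P.eval 0 * ((-1) ^ d * P.eval 0) := by
    simpa using (congr_arg (eval 0) h).symm
  have hsq : ((-1 : R) ^ d) ^ 2 = 1 := by rw [← pow_mul, mul_comm, pow_mul]; simp
  refine ⟨P.eval 0, ?_⟩
  rw [← hdeg, hg0]
  linear_combination (P.eval 0) ^ 2 * hsq

variable {K : Type*} [Field K] [NeZero (2 : K)]

theorem eq_expand_two_of_dvd {g Q : K[X]} (hg : g.Monic) (hirr : Irreducible g) (hQ : Q.Monic)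
    (hQu : ¬IsUnit Q) (heven : Q.comp (-X) = Q) (hdvd : Q ∣ expand K 2 g) : Q = expand K 2 g := by
  obtain ⟨T, rfl⟩ : ∃ T, expand K 2 T = Q := ⟨_, expand_contract_two_of_comp_neg_X_eq heven⟩
  have hTg : T ∣ g := (expand_dvd_expand_iff two_ne_zero).1 hdvd
  have hTu : ¬IsUnit T := fun h => hQu (h.map _)
  exact eq_of_monic_of_associated hQ (hg.expand two_pos)
    (((hirr.dvd_iff.1 hTg).resolve_left hTu).symm.map (expand K 2))

theorem eval_zero_eq_zero_of_comp_neg_X_eq_neg {g P : K[X]} (hP : P.comp (-X) = -P)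
    (hdvd : P ∣ expand K 2 g) : g.eval 0 = 0 := by
  have hP0 : P.eval 0 = 0 := eq_zero_of_eq_neg <| by simpa using congr_arg (eval 0) hP
  obtain ⟨Q, hQ⟩ := hdvd
  simpa [hP0] using congr_arg (eval 0) hQ

theorem isSquare_of_not_irreducible_expand_two {g : K[X]} (hg : g.Monic) (hirr : Irreducible g)
    (hred : ¬Irreducible (expand K 2 g)) : IsSquare ((-1) ^ g.natDegree * g.eval 0) := by
  set G := expand K 2 g
  have hGu : ¬IsUnit G := not_isUnit_of_natDegree_pos G
    (by rw [natDegree_expand]; exact Nat.mul_pos hirr.natDegree_pos two_pos)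
  obtain ⟨P, hPm, hPirr, hPG⟩ := exists_monic_irreducible_factor G hGu
  set d := P.natDegree
  set P' := (-1) ^ d * P.comp (-X)
  have hP'm : P'.Monic := hPm.neg_one_pow_natDegree_mul_comp_neg_X
  have hP'irr : Irreducible P' := (irreducible_isUnit_mul (isUnit_neg_one.pow d)).2 <| by
    simpa [comp_eq_aeval] using (MulEquiv.irreducible_iff algEquivAevalNegX).2 hPirr
  have hGeven : G.comp (-X) = G := expand_two_comp_neg_X g
  have hP'G : P' ∣ G :=
    ((isUnit_neg_one.pow d).mul_left_dvd).2 ((dvd_comp_neg_X_iff P G).1 (by rwa [hGeven]))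
  by_cases hPP' : P' = P
  · have hrefl : P.comp (-X) = (-1) ^ d * P := by
      have hsign : ((-1 : K[X]) ^ d) * (-1) ^ d = 1 := by rw [← mul_pow]; simp
      calc P.comp (-X) = (-1) ^ d * P' := by simp only [P', ← mul_assoc, hsign, one_mul]
        _ = (-1) ^ d * P := by rw [hPP']
    rcases Nat.even_or_odd d with hd | hd
    · have hPeq : P = G := eq_expand_two_of_dvd hg hirr hPm hPirr.not_isUnit
        (by rw [hrefl, hd.neg_one_pow, one_mul]) hPG
      exact absurd (hPeq ▸ hPirr) hred
    · rw [hd.neg_one_pow, neg_one_mul] at hrefl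
      simp [eval_zero_eq_zero_of_comp_neg_X_eq_neg hrefl hPG]
  · have hcop : IsCoprime P P' := hPirr.coprime_iff_not_dvd.2 fun h =>
      hPP' (eq_of_monic_of_associated hP'm hPm (hPirr.associated_of_dvd hP'irr h).symm)
    refine isSquare_of_mul_comp_neg_X_eq_expand_two hPm <| eq_expand_two_of_dvd hg hirr
      (hPm.mul hP'm) (fun h => hPirr.not_isUnit (isUnit_of_mul_isUnit_left h)) ?_
      (hcop.mul_dvd hPG hP'G)
    simp only [mul_comp, pow_comp, neg_comp, one_comp, comp_neg_X_comp_neg_X]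
    ring

theorem isSquare_of_not_irreducible_comp_X_sq_add_C {h : K[X]} (hm : h.Monic)
    (hirr : Irreducible h) (c : K) (hred : ¬Irreducible (h.comp (X ^ 2 + C c))) :
    IsSquare ((-1) ^ h.natDegree * h.eval c) := by
  have hexp : expand K 2 (h.comp (X + C c)) = h.comp (X ^ 2 + C c) := by
    rw [expand_eq_comp_X_pow, comp_assoc, add_comp, X_comp, C_comp]
  have hirr' : Irreducible (h.comp (X + C c)) := by
    simpa [comp_eq_aeval] using (MulEquiv.irreducible_iff (algEquivAevalXAddC c)).2 hirr
  simpa [natDegree_comp] using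
    isSquare_of_not_irreducible_expand_two (hm.comp_X_add_C c) hirr' (hexp ▸ hred)

end Polynomial

theorem irreducible_map_comp_X_sq_add_C {u : ℤ[X]} (hu : u.Monic)
    (hirr : Irreducible (u.map (Int.castRingHom ℚ))) {k : ℤ}
    (hsq : ¬IsSquare ((-1) ^ u.natDegree * u.eval k)) :
    Irreducible ((u.comp (X ^ 2 + C k)).map (Int.castRingHom ℚ)) := by
  by_contra hred
  have := isSquare_of_not_irreducible_comp_X_sq_add_C (hu.map _) hirr k
    (by simpa [Polynomial.map_comp] using hred)
  rw [hu.natDegree_map, eval_intCast_map] at this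
  exact hsq (Rat.isSquare_intCast_iff.1 (by simpa using this))

theorem not_isSquare_of_sq_lt_of_lt_sq {b m : ℤ} (h₁ : b ^ 2 < m) (h₂ : m < (b + 1) ^ 2) :
    ¬IsSquare m := by
  rintro ⟨s, rfl⟩
  have hlo := sq_lt_sq.1 (h₁.trans_eq (sq s).symm)
  have hhi := sq_lt_sq.1 ((sq s).trans_lt h₂)
  cases abs_cases b <;> cases abs_cases (b + 1) <;> omega

theorem not_isSquare_sq_add {b k : ℤ} (hk : 0 < k) (hkb : k ≤ 2 * |b|) :
    ¬IsSquare (b ^ 2 + k) :=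
  not_isSquare_of_sq_lt_of_lt_sq (b := |b|) (by rw [sq_abs]; linarith) (by nlinarith [sq_abs b])

theorem not_isSquare_sq_sub {b k : ℤ} (hk : 0 < k) (hkb : k < 2 * |b| - 1) :
    ¬IsSquare (b ^ 2 - k) :=
  not_isSquare_of_sq_lt_of_lt_sq (b := |b| - 1) (by nlinarith [sq_abs b])
    (by rw [sub_add_cancel, sq_abs]; linarith)

theorem not_isSquare_sq_add_of_abs_le {b k : ℤ} (hk₀ : k ≠ 0) (hk₁ : k ≠ -1) (hkb : |k| ≤ |b|) :
    ¬IsSquare (b ^ 2 + k) := by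
  rcases lt_or_gt_of_ne hk₀ with hk | hk
  · rw [← sub_neg_eq_add]
    exact not_isSquare_sq_sub (neg_pos.2 hk) (by rw [abs_of_neg hk] at hkb; omega)
  · exact not_isSquare_sq_add hk (by rw [abs_of_pos hk] at hkb; linarith [abs_nonneg b])

theorem polyIter_succ' (f : ℤ[X]) (n : ℕ) : polyIter f (n + 1) = (polyIter f n).comp f := by
  induction n with
  | zero => simp [polyIter]
  | succ n ih =>
    show f.comp (polyIter f (n + 1)) = (f.comp (polyIter f n)).comp f
    rw [ih, comp_assoc]

theorem natDegree_polyIter (f : ℤ[X]) (n : ℕ) : (polyIter f n).natDegree = f.natDegree ^ n := by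
  induction n with
  | zero => simp [polyIter]
  | succ n ih => rw [polyIter_succ', natDegree_comp, ih, pow_succ]

theorem monic_polyIter {f : ℤ[X]} (hf : f.Monic) (hf₀ : f.natDegree ≠ 0) (n : ℕ) :
    (polyIter f n).Monic := by
  induction n with
  | zero => exact monic_X
  | succ n ih => rw [polyIter_succ']; exact ih.comp hf hf₀

theorem eval_zero_polyIter_succ (k : ℤ) (n : ℕ) :
    (polyIter (X ^ 2 + C k) (n + 1)).eval 0 = ((polyIter (X ^ 2 + C k) n).eval 0) ^ 2 + k := by
  simp [polyIter]

theorem abs_le_abs_eval_zero_polyIter {k : ℤ} (hk : k ≠ -1) (n : ℕ) :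
    |k| ≤ |(polyIter (X ^ 2 + C k) (n + 1)).eval 0| := by
  induction n with
  | zero => simp [polyIter]
  | succ n ih =>
    rw [eval_zero_polyIter_succ]
    set c := (polyIter (X ^ 2 + C k) (n + 1)).eval 0
    refine le_trans ?_ (le_abs_self _)
    rcases le_or_gt 0 k with hk₀ | hk₀
    · rw [abs_of_nonneg hk₀]; nlinarith
    · rw [abs_of_neg hk₀] at ih ⊢
      have hk₂ : k ≤ -2 := by omega
      nlinarith [sq_abs c, mul_self_le_mul_self (neg_nonneg.2 hk₀.le) ih]

theorem irreducible_map_comp_polyIter_succ {k : ℤ} {g : ℤ[X]} (hg : g.Monic) (n : ℕ)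
    (hirr : Irreducible ((g.comp (polyIter (X ^ 2 + C k) n)).map (Int.castRingHom ℚ)))
    (hsq : ¬IsSquare ((-1) ^ (g.natDegree * 2 ^ n) *
      g.eval ((polyIter (X ^ 2 + C k) (n + 1)).eval 0))) :
    Irreducible ((g.comp (polyIter (X ^ 2 + C k) (n + 1))).map (Int.castRingHom ℚ)) := by
  have hf : (X ^ 2 + C k).natDegree = 2 := natDegree_X_pow_add_C
  rw [polyIter_succ', ← comp_assoc]
  refine irreducible_map_comp_X_sq_add_C
    (hg.comp (monic_polyIter (monic_X_pow_add_C k two_ne_zero) (by omega) n) (by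
      rw [natDegree_polyIter, hf]; positivity)) hirr ?_
  rw [natDegree_comp, natDegree_polyIter, hf]
  simpa [polyIter_succ'] using hsq

theorem irreducible_map_polyIter_succ {k : ℤ} (hk₀ : k ≠ 0) (hk₁ : k ≠ -1) (hk : ¬IsSquare (-k))
    (n : ℕ) : Irreducible ((polyIter (X ^ 2 + C k) (n + 1)).map (Int.castRingHom ℚ)) := by
  induction n with
  | zero =>
    simpa using irreducible_map_comp_polyIter_succ (k := k) monic_X 0
      (by simpa [polyIter] using irreducible_X) (by simpa [polyIter] using hk)
  | succ n ih =>
    have hev : Even (2 ^ (n + 1)) := (Nat.even_pow' n.succ_ne_zero).2 even_two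
    have step := irreducible_map_comp_polyIter_succ (k := k) monic_X (n + 1) (by simpa using ih)
    rw [X_comp] at step
    apply step
    rw [natDegree_X, one_mul, hev.neg_one_pow, one_mul, eval_X, eval_zero_polyIter_succ]
    exact not_isSquare_sq_add_of_abs_le hk₀ hk₁ (abs_le_abs_eval_zero_polyIter hk₁ n)

theorem irreducible_map_X_add_C_comp_polyIter {k a e : ℤ} (hka : a ^ 2 = -k) (ha : 2 ≤ |a|)
    (he : |e| = |a|) (n : ℕ) :
    Irreducible (((X + C e).comp (polyIter (X ^ 2 + C k) n)).map (Int.castRingHom ℚ)) := by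
  induction n with
  | zero => simpa [polyIter] using irreducible_of_degree_eq_one (degree_X_add_C (e : ℚ))
  | succ n ih =>
    refine irreducible_map_comp_polyIter_succ (monic_X_add_C e) n ih ?_
    rw [natDegree_X_add_C, one_mul, eval_add, eval_X, eval_C]
    rcases n with _ | m
    · simp only [polyIter, pow_zero, pow_one, eval_comp, eval_add, eval_pow, eval_X, eval_C]
      rw [show -1 * (0 ^ 2 + k + e) = a ^ 2 - e by rw [hka]; ring]
      rcases lt_or_gt_of_ne (abs_pos.1 (by omega : 0 < |e|)) with he₀ | he₀
      · rw [sub_eq_add_neg]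
        exact not_isSquare_sq_add (neg_pos.2 he₀) (by rw [abs_of_neg he₀] at he; linarith)
      · exact not_isSquare_sq_sub he₀ (by rw [abs_of_pos he₀] at he; linarith)
    · have hev : Even (2 ^ (m + 1)) := (Nat.even_pow' m.succ_ne_zero).2 even_two
      rw [hev.neg_one_pow, one_mul, eval_zero_polyIter_succ]
      have hc := abs_le_abs_eval_zero_polyIter (k := k) (by nlinarith [sq_abs a]) m
      set c := (polyIter (X ^ 2 + C k) (m + 1)).eval 0
      rw [← neg_neg k, ← hka, abs_neg, abs_sq] at hc
      rw [show c ^ 2 + k + e = c ^ 2 - (a ^ 2 - e) by rw [hka]; ring]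
      exact not_isSquare_sq_sub (by nlinarith [le_abs_self e, sq_abs a])
        (by nlinarith [le_abs_self e, neg_abs_le e, sq_abs a])

theorem stability_X_sq_add_k (k : ℤ) (hk0 : k ≠ 0) (hk1 : k ≠ -1) :
    ((¬∃ a : ℤ, a ^ 2 = -k) →
      ∀ n : ℕ, 1 ≤ n → Irreducible ((polyIter (X ^ 2 + C k) n).map (Int.castRingHom ℚ))) ∧
    (∀ a : ℤ, a ^ 2 = -k →
      (X ^ 2 + C k : Polynomial ℤ) = (X + C a) * (X - C a) ∧
      (∀ n : ℕ, Irreducible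
        (((X + C a).comp (polyIter (X ^ 2 + C k) n)).map (Int.castRingHom ℚ))) ∧
      (∀ n : ℕ, Irreducible
        (((X - C a).comp (polyIter (X ^ 2 + C k) n)).map (Int.castRingHom ℚ)))) := by
  refine ⟨fun hk n hn => ?_, fun a ha => ?_⟩
  · obtain ⟨n, rfl⟩ := Nat.exists_eq_add_of_le' hn
    refine irreducible_map_polyIter_succ hk0 hk1 ?_ n
    simpa [isSquare_iff_exists_sq, eq_comm] using hk
  have ha₂ : 2 ≤ |a| := by
    by_contra! h
    rcases (show |a| = 0 ∨ |a| = 1 by have := abs_nonneg a; omega) with h | h <;>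
      rw [← sq_abs, h] at ha <;> omega
  refine ⟨?_, irreducible_map_X_add_C_comp_polyIter ha ha₂ rfl, ?_⟩
  · rw [← neg_neg k, ← ha]
    simp only [map_neg, map_pow]
    ring
  · simpa [sub_eq_add_neg] using irreducible_map_X_add_C_comp_polyIter ha ha₂ (abs_neg a)
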